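/- arXiv:2407.01198 — 5 statements merged into one kernel-verified Lean document; each statement's English description precedes it below -/
import Mathlib

section
/- Let k ≥ 2 and let A ⊆ Z_k with 2 ≤ |A| ≤ k − 2 be a near arithmetic progression. Then at least one of the following holds: (1) there exists a proper divisor d > 1 of k such that for every subset A' ⊆ A with |A'| = |A| − 1 and every x ∈ Z_k, if A' + x ⊆ A then x is a multiple of d; or (2) there exists a ∈ Z_k with gcd(a, k) = 1 such that for every subset A' ⊆ A with |A'| = |A| − 1 and every x ∈ Z_k, if A' + x ⊆ A then x ∈ {0, a, −a}. -/
open Finset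

section NAPaux

variable {k : ℕ}
variable {k : ℕ}

private lemma shift_card (A : Finset (ZMod k)) (t : ZMod k) :
    (A.image (· + t)).card = A.card :=
  card_image_of_injective _ (add_left_injective t)

private lemma mem_shift {A : Finset (ZMod k)} {t w : ZMod k} :
    w ∈ A.image (· + t) ↔ w - t ∈ A := by
  constructor
  · intro h; obtain ⟨a, ha, rfl⟩ := mem_image.mp h; simpa using ha
  · intro h; exact mem_image.mpr ⟨w - t, h, by ring⟩

private lemma shift_shift (A : Finset (ZMod k)) (s t : ZMod k) :
    (A.image (· + s)).image (· + t) = A.image (· + (s + t)) := by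
  rw [image_image]; congr 1; funext a; simp [add_assoc]

private lemma shift_eq_of_subset {A : Finset (ZMod k)} {t : ZMod k}
    (h : A.image (· + t) ⊆ A) : A.image (· + t) = A :=
  eq_of_subset_of_card_le h (by rw [shift_card])

private lemma shift_closure [NeZero k] {A : Finset (ZMod k)} {t : ZMod k}
    (h : A.image (· + t) = A) (c : ZMod k) : A.image (· + t * c) = A := by
  have hn : ∀ n : ℕ, A.image (· + t * (n : ZMod k)) = A := by
    intro n
    induction n with
    | zero => simp
    | succ n ih =>
      have hh : A.image (· + (t * (n : ZMod k) + t)) = A := by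
        rw [← shift_shift, ih, h]
      rw [show ((n + 1 : ℕ) : ZMod k) = ((n : ℕ) : ZMod k) + 1 by push_cast; ring,
        show t * (((n : ℕ) : ZMod k) + 1) = t * ((n : ℕ) : ZMod k) + t by ring]
      exact hh
  have := hn c.val
  rwa [ZMod.natCast_rightInverse c] at this

private lemma shift_neg_eq {A : Finset (ZMod k)} {t : ZMod k}
    (h : A.image (· + -t) = A) : A.image (· + t) = A := by
  conv_lhs => rw [← h]
  rw [shift_shift]
  simp

private lemma sdiff_shift_card (A : Finset (ZMod k)) (t : ZMod k) :
    ((A.image (· + t)) \ A).card = (A \ A.image (· + t)).card := by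
  have h1 := card_sdiff_add_card_inter (A.image (· + t)) A
  have h2 := card_sdiff_add_card_inter A (A.image (· + t))
  rw [shift_card, inter_comm] at h1
  omega

private lemma sdiff_nonempty_of_ne {A : Finset (ZMod k)} {t : ZMod k}
    (h : A.image (· + t) ≠ A) : (A \ A.image (· + t)).Nonempty := by
  rw [sdiff_nonempty]
  intro hsub
  exact h (eq_of_subset_of_card_le hsub (by rw [shift_card])).symm

private lemma stab_of_P {A : Finset (ZMod k)} {z t : ZMod k}
    (hz : z ≠ 0) (hAz : A.image (· + z) = A)
    (hPt : (A \ A.image (· + t)).card ≤ 1) : A.image (· + t) = A := by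
  by_contra hne
  obtain ⟨a, ha⟩ := sdiff_nonempty_of_ne hne
  have haA : a ∈ A := (mem_sdiff.mp ha).1
  have hat : a - t ∉ A := fun h => (mem_sdiff.mp ha).2 (mem_shift.mpr h)
  have haz : a + z ∈ A := by
    rw [← hAz]; exact mem_image_of_mem _ haA
  have hazt : (a + z) - t ∉ A := by
    intro h
    have h' : (a - t) + z ∈ A.image (· + z) := by
      rw [hAz]; convert h using 1; ring
    apply hat
    simpa using mem_shift.mp h'
  have h2 : a + z ∈ A \ A.image (· + t) :=
    mem_sdiff.mpr ⟨haz, fun h => hazt (mem_shift.mp h)⟩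
  exact hz (left_eq_add.mp (card_le_one.mp hPt a ha (a + z) h2))

private lemma trichotomy [NeZero k] {A : Finset (ZMod k)} {x y : ZMod k}
    (hA2 : 2 ≤ A.card)
    (hx : x ≠ 0) (hy : y ≠ 0)
    (hPx : (A \ A.image (· + x)).card ≤ 1) (hPy : (A \ A.image (· + y)).card ≤ 1) :
    (∃ c : ZMod k, y = x * c) ∨
    (∀ z : ZMod k, (∃ c1 c2 : ZMod k, z = x * c1 + y * c2) →
      (A \ A.image (· + z)).card ≤ 1) := by
  classical
  by_cases hstab : ∃ z : ZMod k, z ≠ 0 ∧ A.image (· + z) = A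
  · right
    obtain ⟨z, hz0, hAz⟩ := hstab
    have hx' : A.image (· + x) = A := stab_of_P hz0 hAz hPx
    have hy' : A.image (· + y) = A := stab_of_P hz0 hAz hPy
    rintro w ⟨c1, c2, rfl⟩
    have : A.image (· + (x * c1 + y * c2)) = A := by
      rw [← shift_shift, shift_closure hx' c1, shift_closure hy' c2]
    rw [this]
    simp
  push_neg at hstab
  by_cases hlin : ∃ c : ZMod k, y = x * c
  · left; exact hlin
  right
  -- run decomposition for x
  have hAx : A.image (· + x) ≠ A := hstab x hx
  obtain ⟨b, hbmem⟩ := sdiff_nonempty_of_ne hAx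
  have hbA : b ∈ A := (mem_sdiff.mp hbmem).1
  have hbx : b - x ∉ A := fun h => (mem_sdiff.mp hbmem).2 (mem_shift.mpr h)
  have hex : ∃ i : ℕ, b + (i : ZMod k) * x ∉ A := by
    refine ⟨k - 1, ?_⟩
    have hcast : ((k - 1 : ℕ) : ZMod k) = -1 := by
      have h1 : ((k - 1 : ℕ) : ZMod k) = (k : ZMod k) - 1 := by
        rw [Nat.cast_sub (by have := NeZero.pos k; omega : 1 ≤ k)]; simp
      rw [h1, ZMod.natCast_self]; ring
    rw [hcast]
    convert hbx using 2
    ring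
  set m := Nat.find hex with hm
  have hmspec : b + (m : ZMod k) * x ∉ A := Nat.find_spec hex
  have hmmin : ∀ j, j < m → b + (j : ZMod k) * x ∈ A := by
    intro j hj
    have := Nat.find_min hex hj
    simpa using this
  have hm0 : 0 < m := by
    rcases Nat.eq_zero_or_pos m with h | h
    · exfalso; apply hmspec; rw [h]; simpa using hbA
    · exact h
  set P : Finset (ZMod k) := (Finset.range m).image (fun i : ℕ => b + (i : ZMod k) * x) with hPdef
  set C : Finset (ZMod k) := A \ P with hCdef
  have hPA : P ⊆ A := by
    intro p hp
    obtain ⟨i, hi, rfl⟩ := mem_image.mp hp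
    exact hmmin i (mem_range.mp hi)
  have hbP : b ∈ P := mem_image.mpr ⟨0, mem_range.mpr hm0, by simp⟩
  have hPrep : ∀ p ∈ P, ∃ t : ZMod k, p = b + x * t := by
    intro p hp
    obtain ⟨i, _, rfl⟩ := mem_image.mp hp
    exact ⟨i, by ring⟩
  -- the unique "plus-bad" element is b + (m-1) x
  have hm1lt : m - 1 < m := by omega
  have hcastm : ((m - 1 : ℕ) : ZMod k) * x + x = (m : ZMod k) * x := by
    have h1 : ((m - 1 + 1 : ℕ) : ZMod k) = (m : ZMod k) := by
      rw [Nat.sub_add_cancel hm0]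
    rw [← h1]; push_cast; ring
  have hplusuniq : ∀ a' ∈ A, a' + x ∉ A → a' = b + ((m - 1 : ℕ) : ZMod k) * x := by
    intro a' ha' hax
    have hcard : ((A.image (· + x)) \ A).card ≤ 1 := by
      rw [sdiff_shift_card]; exact hPx
    have h1 : a' + x ∈ (A.image (· + x)) \ A :=
      mem_sdiff.mpr ⟨mem_image_of_mem _ ha', hax⟩
    have h2 : (b + ((m - 1 : ℕ) : ZMod k) * x) + x ∈ (A.image (· + x)) \ A := by
      refine mem_sdiff.mpr ⟨mem_image_of_mem _ (hmmin _ hm1lt), ?_⟩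
      rw [add_assoc, hcastm]
      exact hmspec
    exact add_right_cancel (card_le_one.mp hcard _ h1 _ h2)
  -- C is closed under + x
  have hCx : ∀ c ∈ C, c + x ∈ C := by
    intro c hc
    have hcA : c ∈ A := (mem_sdiff.mp hc).1
    have hcP : c ∉ P := (mem_sdiff.mp hc).2
    have h1 : c + x ∈ A := by
      by_contra hno
      apply hcP
      rw [hplusuniq c hcA hno]
      exact mem_image.mpr ⟨m - 1, mem_range.mpr hm1lt, rfl⟩
    refine mem_sdiff.mpr ⟨h1, ?_⟩
    intro hcxP
    obtain ⟨i, hi, hieq⟩ := mem_image.mp hcxP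
    rcases Nat.eq_zero_or_pos i with rfl | hipos
    · apply hbx
      have h0 : b + ((0 : ℕ) : ZMod k) * x = b := by simp
      rw [h0] at hieq
      have hcbx : c = b - x := by rw [hieq]; ring
      rw [← hcbx]; exact hcA
    · apply hcP
      have hieq2 : c = b + ((i - 1 : ℕ) : ZMod k) * x := by
        have h1 : ((i - 1 + 1 : ℕ) : ZMod k) = (i : ZMod k) := by
          rw [Nat.sub_add_cancel hipos]
        have hsum : ((i - 1 : ℕ) : ZMod k) * x + x = (i : ZMod k) * x := by
          rw [← h1]; push_cast; ring
        have h2 : b + ((i - 1 : ℕ) : ZMod k) * x + x = c + x := by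
          rw [add_assoc, hsum]; exact hieq
        exact (add_right_cancel h2).symm
      rw [hieq2]
      exact mem_image.mpr ⟨i - 1, mem_range.mpr (by have := mem_range.mp hi; omega), rfl⟩
  have hCximg : C.image (· + x) = C := by
    apply shift_eq_of_subset
    intro w hw
    obtain ⟨c, hc, rfl⟩ := mem_image.mp hw
    exact hCx c hc
  have hCxc : ∀ c ∈ C, ∀ t : ZMod k, c + x * t ∈ C := by
    intro c hc t
    have := shift_closure hCximg t
    rw [← this]
    exact mem_image_of_mem _ hc
  -- Case C = ∅
  by_cases hCne : C = ∅
  · exfalso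
    have hAP : A ⊆ P := by
      intro a ha
      by_contra h
      have : a ∈ C := mem_sdiff.mpr ⟨ha, h⟩
      rw [hCne] at this
      exact absurd this (notMem_empty _)
    have hbad : ∀ a ∈ A, a - y ∉ A := by
      intro a ha hya
      obtain ⟨t1, ht1⟩ := hPrep a (hAP ha)
      obtain ⟨t2, ht2⟩ := hPrep (a - y) (hAP hya)
      apply hlin
      refine ⟨t1 - t2, ?_⟩
      calc y = (b + x * t1) - (b + x * t2) := by rw [← ht1, ← ht2]; ring
      _ = x * (t1 - t2) := by ring
    have hsub : A ⊆ A \ A.image (· + y) := fun a ha =>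
      mem_sdiff.mpr ⟨ha, fun h => hbad a ha (mem_shift.mp h)⟩
    have := card_le_card hsub
    omega
  -- Case ∃ bad element in C
  by_cases hcstar : ∃ c ∈ C, c - y ∉ A
  · obtain ⟨cs, hcsC, hcsy⟩ := hcstar
    have hcsA : cs ∈ A := (mem_sdiff.mp hcsC).1
    have huniq : ∀ a ∈ A, a - y ∉ A → a = cs := fun a ha hay =>
      card_le_one.mp hPy a (mem_sdiff.mpr ⟨ha, fun h => hay (mem_shift.mp h)⟩)
        cs (mem_sdiff.mpr ⟨hcsA, fun h => hcsy (mem_shift.mp h)⟩)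
    have hgood : ∀ t : ZMod k, x * t ≠ 0 → (cs + x * t) - y ∈ A := by
      intro t ht
      by_contra hno
      have h1 : cs + x * t ∈ A := (mem_sdiff.mp (hCxc cs hcsC t)).1
      have := huniq _ h1 hno
      exact ht (by
        have h2 : cs + x * t = cs + 0 := by rw [this]; ring
        exact add_left_cancel h2)
    have hst : ∃ t0 : ZMod k, cs - y = b + x * t0 := by
      have h1 : (cs + x) - y ∈ A := by
        have := hgood 1 (by simpa using hx)
        simpa using this
      have h2 : (cs + x) - y ∈ P := by
        by_contra hnp
        have hC2 : (cs + x) - y ∈ C := mem_sdiff.mpr ⟨h1, hnp⟩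
        have h3 := hCxc _ hC2 (-1)
        have heq : (cs + x) - y + x * (-1) = cs - y := by ring
        rw [heq] at h3
        exact hcsy (mem_sdiff.mp h3).1
      obtain ⟨t, ht⟩ := hPrep _ h2
      refine ⟨t - 1, ?_⟩
      calc cs - y = ((cs + x) - y) - x := by ring
      _ = b + x * (t - 1) := by rw [ht]; ring
    obtain ⟨t0, ht0⟩ := hst
    have hK1 : ∀ t : ZMod k, b + x * t ≠ cs - y → b + x * t ∈ A := by
      intro t hne
      have hxt : x * (t - t0) ≠ 0 := by
        intro h0
        apply hne
        calc b + x * t = (b + x * t0) + x * (t - t0) := by ring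
        _ = (cs - y) + 0 := by rw [← ht0, h0]
        _ = cs - y := by ring
      have hg := hgood (t - t0) hxt
      have heq : cs + x * (t - t0) - y = b + x * t := by
        calc cs + x * (t - t0) - y = (cs - y) + x * (t - t0) := by ring
        _ = b + x * t := by rw [ht0]; ring
      rwa [heq] at hg
    have hbx' : b - x = cs - y := by
      by_contra hne
      apply hbx
      have h := hK1 (-1) (by
        intro h'
        apply hne
        rw [← h']; ring)
      have : b + x * (-1) = b - x := by ring
      rwa [this] at h
    have hbm' : b + (m : ZMod k) * x = cs - y := by
      by_contra hne
      apply hmspec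
      have h := hK1 ((m : ℕ) : ZMod k) (by
        intro h'
        apply hne
        rw [← h']; ring)
      have : b + x * ((m : ℕ) : ZMod k) = b + (m : ZMod k) * x := by ring
      rwa [this] at h
    set U : Finset (ZMod k) := insert (b - x) A with hUdef
    have hbxU : b - x ∈ U := mem_insert_self _ _
    have hAU : A ⊆ U := subset_insert _ _
    have hUx : U.image (· + x) = U := by
      apply eq_of_subset_of_card_le
      · intro w hw
        obtain ⟨v, hv, rfl⟩ := mem_image.mp hw
        rcases mem_insert.mp hv with rfl | hvA
        · have : b - x + x = b := by ring
          rw [this]; exact hAU hbA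
        · by_cases hvC : v ∈ C
          · exact hAU (mem_sdiff.mp (hCx v hvC)).1
          · have hvP : v ∈ P := by
              by_contra h
              exact hvC (mem_sdiff.mpr ⟨hvA, h⟩)
            obtain ⟨i, hi, rfl⟩ := mem_image.mp hvP
            rcases Nat.lt_or_ge (i + 1) m with hlt | hge
            · have hmem := hmmin (i + 1) hlt
              have heq : b + (i : ZMod k) * x + x = b + ((i + 1 : ℕ) : ZMod k) * x := by
                push_cast; ring
              rw [heq]; exact hAU hmem
            · have him : i + 1 = m := by
                have := mem_range.mp hi; omega
              have heq : b + (i : ZMod k) * x + x = b + (m : ZMod k) * x := by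
                rw [← him]; push_cast; ring
              rw [heq, hbm', ← hbx']
              exact hbxU
      · rw [shift_card]
    have hUyneg : U.image (· + -y) = U := by
      apply eq_of_subset_of_card_le
      · intro w hw
        obtain ⟨v, hv, rfl⟩ := mem_image.mp hw
        have hsub : v + -y = v - y := by ring
        rw [hsub]
        rcases mem_insert.mp hv with rfl | hvA
        · have hbcs : b ≠ cs := by
            intro h
            rw [h] at hbP
            exact (mem_sdiff.mp hcsC).2 hbP
          have hby : b - y ∈ A := by
            by_contra h
            exact hbcs (huniq b hbA h)
          have hbyC : b - y ∈ C := by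
            refine mem_sdiff.mpr ⟨hby, ?_⟩
            intro hP'
            obtain ⟨t, ht⟩ := hPrep _ hP'
            exact hlin ⟨-t, by
              calc y = b - (b - y) := by ring
              _ = x * -t := by rw [ht]; ring⟩
          have h3 := hCxc _ hbyC (-1)
          have heq : b - y + x * (-1) = b - x - y := by ring
          rw [heq] at h3
          exact hAU (mem_sdiff.mp h3).1
        · by_cases hvcs : v = cs
          · rw [hvcs, ← hbx']; exact hbxU
          · have : v - y ∈ A := by
              by_contra h
              exact hvcs (huniq v hvA h)
            exact hAU this
      · rw [shift_card]
    have hUy : U.image (· + y) = U := shift_neg_eq hUyneg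
    rintro z ⟨c1, c2, rfl⟩
    have hUz : U.image (· + (x * c1 + y * c2)) = U := by
      rw [← shift_shift, shift_closure hUx c1, shift_closure hUy c2]
    have hbxA : b - x ∉ A := hbx
    have hAz : A.image (· + (x * c1 + y * c2)) =
        U.erase ((b - x) + (x * c1 + y * c2)) := by
      have hAe : A = U.erase (b - x) := by
        rw [hUdef, erase_insert hbxA]
      rw [hAe, image_erase (add_left_injective _), hUz]
    have hsub : A \ A.image (· + (x * c1 + y * c2)) ⊆ {(b - x) + (x * c1 + y * c2)} := by
      intro a ha
      obtain ⟨haA, hanot⟩ := mem_sdiff.mp ha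
      rw [hAz] at hanot
      rw [mem_singleton]
      by_contra hne
      exact hanot (mem_erase.mpr ⟨hne, hAU haA⟩)
    calc (A \ A.image (· + (x * c1 + y * c2))).card ≤ _ := card_le_card hsub
    _ = 1 := card_singleton _
  · push_neg at hcstar
    have hCyC : ∀ c ∈ C, c - y ∈ C := by
      intro c hc
      refine mem_sdiff.mpr ⟨hcstar c hc, ?_⟩
      intro hPmem
      obtain ⟨t, ht⟩ := hPrep _ hPmem
      have h1 : c + x * (-t - 1) ∈ C := hCxc c hc _
      have h2 : (c + x * (-t - 1)) - y ∈ A := hcstar _ h1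
      apply hbx
      have heq : (c + x * (-t - 1)) - y = b - x := by
        calc (c + x * (-t - 1)) - y = (c - y) + x * (-t - 1) := by ring
        _ = (b + x * t) + x * (-t - 1) := by rw [ht]
        _ = b - x := by ring
      rwa [heq] at h2
    have hCyimg : C.image (· + -y) = C := by
      apply eq_of_subset_of_card_le
      · intro w hw
        obtain ⟨c, hc, rfl⟩ := mem_image.mp hw
        have := hCyC c hc
        have heq : c + -y = c - y := by ring
        rwa [heq]
      · rw [shift_card]
    have hCy : C.image (· + y) = C := shift_neg_eq hCyimg
    have hPbad : ∀ p ∈ P, p - y ∉ A := by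
      intro p hp hpy
      by_cases hyC : p - y ∈ C
      · have h1 : (p - y) + y ∈ C.image (· + y) := mem_image_of_mem _ hyC
        rw [hCy] at h1
        have hpc : p ∈ C := by
          have heq : p - y + y = p := by ring
          rwa [heq] at h1
        exact (mem_sdiff.mp hpc).2 hp
      · have hyP : p - y ∈ P := by
          by_contra h
          exact hyC (mem_sdiff.mpr ⟨hpy, h⟩)
        obtain ⟨t1, ht1⟩ := hPrep p hp
        obtain ⟨t2, ht2⟩ := hPrep _ hyP
        exact hlin ⟨t1 - t2, by linear_combination ht1 - ht2⟩
    have hm1 : m = 1 := by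
      by_contra hne
      have h2m : 2 ≤ m := by omega
      have hb1 : b + ((1 : ℕ) : ZMod k) * x ∈ P :=
        mem_image.mpr ⟨1, mem_range.mpr (by omega), rfl⟩
      have e1 : b ∈ A \ A.image (· + y) :=
        mem_sdiff.mpr ⟨hbA, fun h => hPbad b hbP (mem_shift.mp h)⟩
      have e2 : b + ((1 : ℕ) : ZMod k) * x ∈ A \ A.image (· + y) :=
        mem_sdiff.mpr ⟨hPA hb1, fun h => hPbad _ hb1 (mem_shift.mp h)⟩
      have heq := card_le_one.mp hPy _ e1 _ e2
      apply hx
      have h0 : b + 0 = b + ((1 : ℕ) : ZMod k) * x := by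
        rw [add_zero]; exact heq
      have := add_left_cancel h0
      simpa using this.symm
    rintro z ⟨c1, c2, rfl⟩
    have hCz : C.image (· + (x * c1 + y * c2)) = C := by
      rw [← shift_shift, shift_closure hCximg c1, shift_closure hCy c2]
    have hsub : A \ A.image (· + (x * c1 + y * c2)) ⊆ {b} := by
      intro a ha
      obtain ⟨haA, hanot⟩ := mem_sdiff.mp ha
      rw [mem_singleton]
      by_contra hne
      have haP : a ∉ P := by
        intro hp
        obtain ⟨i, hi, rfl⟩ := mem_image.mp hp
        have hi0 : i = 0 := by
          have := mem_range.mp hi; omega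
        apply hne
        rw [hi0]; simp
      have haC : a ∈ C := mem_sdiff.mpr ⟨haA, haP⟩
      apply hanot
      have h1 : a ∈ C.image (· + (x * c1 + y * c2)) := by rw [hCz]; exact haC
      obtain ⟨c', hc', heq⟩ := mem_image.mp h1
      exact mem_image.mpr ⟨c', (mem_sdiff.mp hc').1, heq⟩
    calc (A \ A.image (· + (x * c1 + y * c2))).card ≤ _ := card_le_card hsub
    _ = 1 := card_singleton _

private lemma unit_progression [NeZero k] {A : Finset (ZMod k)} {a u : ZMod k}
    (hk : 2 ≤ k) (hA2 : 2 ≤ A.card) (hAk : A.card ≤ k - 2)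
    (hau : a * u = 1)
    (hPa : (A \ A.image (· + a)).card ≤ 1) :
    ∃ b : ZMod k, A = (Finset.range A.card).image (fun i : ℕ => b + (i : ZMod k) * a) := by
  classical
  have hknz : 0 < k := by omega
  have hcardk : Fintype.card (ZMod k) = k := ZMod.card k
  -- complement is nonempty
  have hcompl : ∃ w : ZMod k, w ∉ A := by
    by_contra h
    push_neg at h
    have : A = Finset.univ := eq_univ_of_forall h
    rw [this, card_univ, hcardk] at hAk
    omega
  obtain ⟨w0, hw0⟩ := hcompl
  have hua : u * a = 1 := by rw [mul_comm]; exact hau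
  -- A + a ≠ A
  have hAa : A.image (· + a) ≠ A := by
    intro heq
    obtain ⟨a0, ha0⟩ := card_pos.mp (by omega : 0 < A.card)
    apply hw0
    have h1 : A.image (· + a * (u * (w0 - a0))) = A := shift_closure heq _
    have h2 : a * (u * (w0 - a0)) = w0 - a0 := by
      rw [← mul_assoc, hau, one_mul]
    rw [h2] at h1
    rw [← h1]
    exact mem_image.mpr ⟨a0, ha0, by ring⟩
  obtain ⟨b, hbmem⟩ := sdiff_nonempty_of_ne hAa
  have hbA : b ∈ A := (mem_sdiff.mp hbmem).1
  have hbx : b - a ∉ A := fun h => (mem_sdiff.mp hbmem).2 (mem_shift.mpr h)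
  -- reachability
  have reach : ∀ c : ZMod k, ∃ i : ℕ, i < k ∧ c + (i : ZMod k) * a = w0 := by
    intro c
    refine ⟨((w0 - c) * u).val, ZMod.val_lt _, ?_⟩
    rw [ZMod.natCast_rightInverse]
    rw [mul_assoc, hua, mul_one]
    ring
  have reach2 : ∀ c : ZMod k, ∃ i : ℕ, i < k ∧ c - (i : ZMod k) * a = w0 := by
    intro c
    refine ⟨((c - w0) * u).val, ZMod.val_lt _, ?_⟩
    rw [ZMod.natCast_rightInverse]
    rw [mul_assoc, hua, mul_one]
    ring
  -- n := least i with b + i a ∉ A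
  have hex : ∃ i : ℕ, b + (i : ZMod k) * a ∉ A := by
    obtain ⟨i, _, hi⟩ := reach b
    exact ⟨i, by rw [hi]; exact hw0⟩
  set n := Nat.find hex with hn
  have hnspec : b + (n : ZMod k) * a ∉ A := Nat.find_spec hex
  have hnmin : ∀ j, j < n → b + (j : ZMod k) * a ∈ A := by
    intro j hj
    have := Nat.find_min hex hj
    simpa using this
  have hn0 : 0 < n := by
    rcases Nat.eq_zero_or_pos n with h | h
    · exfalso; apply hnspec; rw [h]; simpa using hbA
    · exact h
  have hnk : n < k := by
    obtain ⟨i, hik, hi⟩ := reach b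
    have : n ≤ i := Nat.find_le (by rw [hi]; exact hw0)
    omega
  -- injectivity
  have hinj : ∀ i j : ℕ, i < k → j < k →
      b + (i : ZMod k) * a = b + (j : ZMod k) * a → i = j := by
    intro i j hik hjk h
    have h1 : (i : ZMod k) * a = (j : ZMod k) * a := by
      have := add_left_cancel h
      exact this
    have h2 : (i : ZMod k) = (j : ZMod k) := by
      calc (i : ZMod k) = (i : ZMod k) * a * u := by rw [mul_assoc, hau, mul_one]
      _ = (j : ZMod k) * a * u := by rw [h1]
      _ = (j : ZMod k) := by rw [mul_assoc, hau, mul_one]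
    calc i = ((i : ZMod k)).val := (ZMod.val_cast_of_lt hik).symm
    _ = ((j : ZMod k)).val := by rw [h2]
    _ = j := ZMod.val_cast_of_lt hjk
  -- A = image
  have hAeq : A = (Finset.range n).image (fun i : ℕ => b + (i : ZMod k) * a) := by
    apply Finset.Subset.antisymm
    · intro c hc
      have hex2 : ∃ i : ℕ, c - (i : ZMod k) * a ∉ A := by
        obtain ⟨i, _, hi⟩ := reach2 c
        exact ⟨i, by rw [hi]; exact hw0⟩
      set i0 := Nat.find hex2 with hi0
      have hi0spec : c - (i0 : ZMod k) * a ∉ A := Nat.find_spec hex2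
      have hi0min : ∀ j, j < i0 → c - (j : ZMod k) * a ∈ A := by
        intro j hj
        have := Nat.find_min hex2 hj
        simpa using this
      have hi0pos : 0 < i0 := by
        rcases Nat.eq_zero_or_pos i0 with h | h
        · exfalso; apply hi0spec; rw [h]; simpa using hc
        · exact h
      obtain ⟨i1, hi1⟩ : ∃ i1, i0 = i1 + 1 := ⟨i0 - 1, by omega⟩
      have he1 : c - (i1 : ZMod k) * a ∈ A := hi0min i1 (by omega)
      have he2 : (c - (i1 : ZMod k) * a) - a ∉ A := by
        have : (c - (i1 : ZMod k) * a) - a = c - (i0 : ZMod k) * a := by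
          rw [hi1]; push_cast; ring
        rw [this]; exact hi0spec
      have heb : c - (i1 : ZMod k) * a = b := by
        have hmem : c - (i1 : ZMod k) * a ∈ A \ A.image (· + a) :=
          mem_sdiff.mpr ⟨he1, fun h => he2 (mem_shift.mp h)⟩
        exact card_le_one.mp hPa _ hmem b hbmem
      have hceq : c = b + (i1 : ZMod k) * a := by
        rw [← heb]; ring
      have hi1n : i1 < n := by
        by_contra hge
        push_neg at hge
        apply hnspec
        have : b + (n : ZMod k) * a = c - ((i1 - n : ℕ) : ZMod k) * a := by
          rw [hceq, Nat.cast_sub hge]; ring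
        rw [this]
        exact hi0min (i1 - n) (by omega)
      exact mem_image.mpr ⟨i1, mem_range.mpr hi1n, hceq.symm⟩
    · intro c hc
      obtain ⟨i, hi, rfl⟩ := mem_image.mp hc
      exact hnmin i (mem_range.mp hi)
  have hcardn : A.card = n := by
    rw [hAeq]
    rw [card_image_of_injOn, card_range]
    intro i hi j hj h
    exact hinj i j (lt_trans (mem_range.mp (by exact hi)) hnk) (lt_trans (mem_range.mp (by exact hj)) hnk) h
  exact ⟨b, by rw [hcardn]; exact hAeq⟩


private lemma unit_case [NeZero k] {A : Finset (ZMod k)} {a u b : ZMod k}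
    (hk : 2 ≤ k) (hA2 : 2 ≤ A.card) (hAk : A.card ≤ k - 2)
    (hau : a * u = 1)
    (hb : A = (Finset.range A.card).image (fun i : ℕ => b + (i : ZMod k) * a))
    {x : ZMod k} (hx : x ≠ 0)
    (hPx : (A \ A.image (· + x)).card ≤ 1) :
    x = a ∨ x = -a := by
  classical
  set m := A.card with hm
  have hua : u * a = 1 := by rw [mul_comm]; exact hau
  have hinj : ∀ i j : ℕ, i < k → j < k →
      b + (i : ZMod k) * a = b + (j : ZMod k) * a → i = j := by
    intro i j hik hjk h
    have h1 : (i : ZMod k) = (j : ZMod k) := by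
      have h0 := add_left_cancel h
      calc (i : ZMod k) = (i : ZMod k) * a * u := by rw [mul_assoc, hau, mul_one]
      _ = (j : ZMod k) * a * u := by rw [h0]
      _ = (j : ZMod k) := by rw [mul_assoc, hau, mul_one]
    calc i = ((i : ZMod k)).val := (ZMod.val_cast_of_lt hik).symm
    _ = ((j : ZMod k)).val := by rw [h1]
    _ = j := ZMod.val_cast_of_lt hjk
  have hxv : x = ((x * u).val : ZMod k) * a := by
    rw [ZMod.natCast_rightInverse, mul_assoc, hua, mul_one]
  set v := (x * u).val with hv
  have hvk : v < k := ZMod.val_lt _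
  have hv0 : v ≠ 0 := by
    intro h
    apply hx
    rw [hxv, h]
    simp
  by_cases hv1 : v = 1
  · left; rw [hxv, hv1]; simp
  by_cases hvk1 : v = k - 1
  · right
    rw [hxv, hvk1]
    have hcast : ((k - 1 : ℕ) : ZMod k) = -1 := by
      have : ((k - 1 : ℕ) : ZMod k) = (k : ZMod k) - 1 := by
        rw [Nat.cast_sub (by omega : 1 ≤ k)]
        simp
      rw [this, ZMod.natCast_self]
      ring
    rw [hcast]
    ring
  exfalso
  have hv2 : 2 ≤ v := by omega
  have hvk2 : v ≤ k - 2 := by omega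
  have hmk : m ≤ k - 2 := hAk
  -- two bad indices
  have key : ∀ j : ℕ, (j = min v m - 1 ∨ j = min v m - 2) →
      b + (j : ZMod k) * a ∈ A \ A.image (· + x) := by
    intro j hj
    have hmin := min_choice v m
    have hjm : j < m := by rcases hmin with h | h <;> omega
    have hjv : j < v := by rcases hmin with h | h <;> omega
    have hjA : b + (j : ZMod k) * a ∈ A := by
      rw [hb]
      exact mem_image.mpr ⟨j, mem_range.mpr hjm, rfl⟩
    refine mem_sdiff.mpr ⟨hjA, ?_⟩
    intro hmem
    have hsub : b + (j : ZMod k) * a - x ∈ A := mem_shift.mp hmem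
    set w := j + (k - v) with hw
    have hwm : m ≤ w := by rcases hmin with h | h <;> omega
    have hwk : w < k := by omega
    have hcast : ((w : ℕ) : ZMod k) = (j : ZMod k) - (v : ZMod k) := by
      rw [hw]
      push_cast [Nat.cast_sub (by omega : v ≤ k)]
      rw [ZMod.natCast_self]
      ring
    have heq : b + (j : ZMod k) * a - x = b + (w : ZMod k) * a := by
      rw [hcast, hxv]
      ring
    rw [heq, hb] at hsub
    obtain ⟨l, hl, hleq⟩ := mem_image.mp hsub
    have hlm : l < m := mem_range.mp hl
    have := hinj l w (by omega) hwk hleq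
    omega
  have h1 := key (min v m - 1) (Or.inl rfl)
  have h2 := key (min v m - 2) (Or.inr rfl)
  have hmin := min_choice v m
  have hne : b + ((min v m - 1 : ℕ) : ZMod k) * a ≠ b + ((min v m - 2 : ℕ) : ZMod k) * a := by
    intro h
    have := hinj (min v m - 1) (min v m - 2) (by rcases hmin with h' | h' <;> omega)
      (by rcases hmin with h' | h' <;> omega) h
    rcases hmin with h' | h' <;> omega
  have := card_le_one.mp hPx _ h1 _ h2
  exact hne this


private lemma bezout_zmod [NeZero k] (a b : ZMod k) :
    ∃ c1 c2 : ZMod k,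
      ((Nat.gcd (Nat.gcd a.val b.val) k : ℕ) : ZMod k) = a * c1 + b * c2 := by
  set g1 := Nat.gcd a.val b.val with hg1
  have h1 : (g1 : ℤ) = a.val * Nat.gcdA a.val b.val + b.val * Nat.gcdB a.val b.val :=
    Nat.gcd_eq_gcd_ab _ _
  have h2 : (Nat.gcd g1 k : ℤ) = g1 * Nat.gcdA g1 k + k * Nat.gcdB g1 k :=
    Nat.gcd_eq_gcd_ab _ _
  refine ⟨((Nat.gcdA a.val b.val * Nat.gcdA g1 k : ℤ) : ZMod k),
    ((Nat.gcdB a.val b.val * Nat.gcdA g1 k : ℤ) : ZMod k), ?_⟩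
  have h3 := congrArg (fun n : ℤ => ((n : ZMod k))) h2
  push_cast at h3
  rw [ZMod.natCast_self] at h3
  have h4 := congrArg (fun n : ℤ => ((n : ZMod k))) h1
  push_cast at h4
  rw [ZMod.natCast_rightInverse a, ZMod.natCast_rightInverse b] at h4
  rw [h3, h4]
  push_cast
  ring


private lemma card_sdiff_le_one {A A' : Finset (ZMod k)} {x : ZMod k}
    (hA2 : 2 ≤ A.card) (hsub : A' ⊆ A) (hcard : A'.card = A.card - 1)
    (himg : A'.image (· + x) ⊆ A) : (A \ A.image (· + x)).card ≤ 1 := by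
  have h1 : A \ A.image (· + x) ⊆ A \ A'.image (· + x) :=
    sdiff_subset_sdiff (Subset.refl _) (image_subset_image hsub)
  have h2 : (A \ A'.image (· + x)).card = A.card - A'.card := by
    rw [card_sdiff_of_subset himg, shift_card]
  have h3 := card_le_card h1
  omega

end NAPaux

theorem near_arithmetic_progression_dichotomy (k : ℕ) (hk : 2 ≤ k)
    (A : Finset (ZMod k)) (hA2 : 2 ≤ A.card) (hAk : A.card ≤ k - 2)
    (hnap : ∃ B ⊆ A, ∃ a : ZMod k, a ≠ 0 ∧ B.card = A.card - 1 ∧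
      B.image (· + a) ⊆ A) :
    (∃ d : ℕ, 1 < d ∧ d < k ∧ d ∣ k ∧
      ∀ A' ⊆ A, A'.card = A.card - 1 → ∀ x : ZMod k,
        A'.image (· + x) ⊆ A → ∃ m : ZMod k, x = (d : ZMod k) * m) ∨
    (∃ a : ZMod k, Nat.gcd a.val k = 1 ∧
      ∀ A' ⊆ A, A'.card = A.card - 1 → ∀ x : ZMod k,
        A'.image (· + x) ⊆ A → x ∈ ({0, a, -a} : Set (ZMod k))) := by
  classical
  haveI : NeZero k := ⟨by omega⟩
  obtain ⟨B, hB, a0, ha0ne, hBcard, hBimg⟩ := hnap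
  have hPa0 : (A \ A.image (· + a0)).card ≤ 1 := card_sdiff_le_one hA2 hB hBcard hBimg
  by_cases hunit : ∃ t : ZMod k, t ≠ 0 ∧ (A \ A.image (· + t)).card ≤ 1 ∧
      Nat.gcd t.val k = 1
  · right
    obtain ⟨a, hane, hPa, hgcd⟩ := hunit
    refine ⟨a, hgcd, ?_⟩
    have hu : ∃ u : ZMod k, a * u = 1 := by
      have hIU : IsUnit a := by
        rw [show a = ((a.val : ℕ) : ZMod k) from (ZMod.natCast_rightInverse a).symm]
        exact (ZMod.isUnit_iff_coprime a.val k).mpr hgcd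
      exact isUnit_iff_exists_inv.mp hIU
    obtain ⟨u, hau⟩ := hu
    obtain ⟨b, hb⟩ := unit_progression hk hA2 hAk hau hPa
    intro A' hA' hA'card x hx
    have hPx := card_sdiff_le_one hA2 hA' hA'card hx
    rw [Set.mem_insert_iff, Set.mem_insert_iff, Set.mem_singleton_iff]
    by_cases hx0 : x = 0
    · exact Or.inl hx0
    · rcases unit_case hk hA2 hAk hau hb hx0 hPx with h | h
      · exact Or.inr (Or.inl h)
      · exact Or.inr (Or.inr h)
  · left
    push_neg at hunit
    set S := Finset.univ.filter
      (fun t : ZMod k => t ≠ 0 ∧ (A \ A.image (· + t)).card ≤ 1) with hS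
    have hSne : S.Nonempty := ⟨a0, mem_filter.mpr ⟨mem_univ _, ha0ne, hPa0⟩⟩
    obtain ⟨z, hzS, hzmin⟩ := S.exists_min_image (fun t => Nat.gcd t.val k) hSne
    obtain ⟨-, hzne, hPz⟩ := mem_filter.mp hzS
    set d := Nat.gcd z.val k with hd
    have hdk : d ∣ k := Nat.gcd_dvd_right _ _
    have hzval : z.val ≠ 0 := fun h => hzne ((ZMod.val_eq_zero z).mp h)
    have hdz : d ∣ z.val := Nat.gcd_dvd_left _ _
    have hdlt : d < k := by
      have h1 := Nat.le_of_dvd (Nat.pos_of_ne_zero hzval) hdz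
      have h2 := ZMod.val_lt z
      omega
    have hd0 : 0 < d := Nat.gcd_pos_of_pos_right _ (by omega)
    have hd1 : 1 < d := by
      rcases Nat.lt_or_ge 1 d with h | h
      · exact h
      · exact absurd (by omega : d = 1) (hunit z hzne hPz)
    refine ⟨d, hd1, hdlt, hdk, ?_⟩
    intro A' hA' hA'card x hx
    have hPx := card_sdiff_le_one hA2 hA' hA'card hx
    have hwit : ∀ w : ZMod k, d ∣ w.val → ∃ mm : ZMod k, w = (d : ZMod k) * mm := by
      intro w hdw
      refine ⟨((w.val / d : ℕ) : ZMod k), ?_⟩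
      have h1 : ((d * (w.val / d) : ℕ) : ZMod k) = ((w.val : ℕ) : ZMod k) := by
        rw [Nat.mul_div_cancel' hdw]
      rw [ZMod.natCast_rightInverse w] at h1
      calc w = ((d * (w.val / d) : ℕ) : ZMod k) := h1.symm
      _ = (d : ZMod k) * ((w.val / d : ℕ) : ZMod k) := by push_cast; ring
    by_cases hx0 : x = 0
    · exact ⟨0, by rw [hx0]; ring⟩
    rcases trichotomy hA2 hzne hx0 hPz hPx with ⟨c, hc⟩ | hall
    · obtain ⟨mz, hmz⟩ := hwit z hdz
      exact ⟨mz * c, by rw [hc, hmz]; ring⟩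
    · set d' := Nat.gcd (Nat.gcd z.val x.val) k with hd'
      obtain ⟨c1, c2, hbz⟩ := bezout_zmod z x
      have hPw : (A \ A.image (· + ((d' : ℕ) : ZMod k))).card ≤ 1 :=
        hall _ ⟨c1, c2, hbz⟩
      have hd'z : d' ∣ z.val := dvd_trans (Nat.gcd_dvd_left _ _) (Nat.gcd_dvd_left _ _)
      have hd'x : d' ∣ x.val := dvd_trans (Nat.gcd_dvd_left _ _) (Nat.gcd_dvd_right _ _)
      have hd'k : d' ∣ k := Nat.gcd_dvd_right _ _
      have hd'lt : d' < k := by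
        have h1 := Nat.le_of_dvd (Nat.pos_of_ne_zero hzval) hd'z
        have h2 := ZMod.val_lt z
        omega
      have hd'0 : 0 < d' := Nat.gcd_pos_of_pos_right _ (by omega)
      have hwval : (((d' : ℕ) : ZMod k)).val = d' := ZMod.val_cast_of_lt hd'lt
      have hwne : ((d' : ℕ) : ZMod k) ≠ 0 := by
        intro h
        have h1 := (ZMod.val_eq_zero _).mpr h
        rw [hwval] at h1
        omega
      have hwS : ((d' : ℕ) : ZMod k) ∈ S := mem_filter.mpr ⟨mem_univ _, hwne, hPw⟩
      have hmin := hzmin _ hwS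
      rw [hwval, Nat.gcd_eq_left hd'k] at hmin
      have hd'd : d' ∣ d := Nat.dvd_gcd hd'z hd'k
      have hdd' : d = d' := Nat.le_antisymm hmin (Nat.le_of_dvd hd0 hd'd)
      exact hwit x (by rw [hdd']; exact hd'x)
end

section
/- Let k ≥ 2, let A ⊆ Z_k with |A| ≤ k − 2, let b' ∈ Z_k, let a ∈ Z_k with gcd(a, k) = 1, and suppose A = {b', b'+a, b'+2a, ..., b'+(l−1)a} is an arithmetic progression with l = |A| ≥ 2 and b'−a ∉ A, b'−2a ∉ A. Then for every subset A' ⊆ A with |A'| = |A| − 1 and every x ∈ Z_k, if A' + x ⊆ A then x ∈ {0, a, −a}. -/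
theorem arithmetic_progression_shift (k : ℕ) (hk : 2 ≤ k)
    (l : ℕ) (hl : 2 ≤ l) (b' a : ZMod k) (ha : Nat.gcd a.val k = 1)
    (A : Finset (ZMod k))
    (hA : A = (Finset.range l).image (fun i : ℕ => b' + (i : ZMod k) * a))
    (hcard : A.card = l) (hAk : A.card ≤ k - 2)
    (h1 : b' - a ∉ A) (h2 : b' - 2 * a ∉ A) :
    ∀ A' ⊆ A, A'.card = A.card - 1 → ∀ x : ZMod k,
      A'.image (· + x) ⊆ A → x ∈ ({0, a, -a} : Set (ZMod k)) := by
  intro A' hsub hcardA' x hshift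
  haveI : NeZero k := ⟨by omega⟩
  have hval : ∀ z : ZMod k, ((z.val : ℕ) : ZMod k) = z := fun z => by
    rw [ZMod.natCast_val, ZMod.cast_id]
  have hinv : a * a⁻¹ = 1 := by
    have := ZMod.coe_mul_inv_eq_one a.val ha
    rwa [hval] at this
  have hinv' : a⁻¹ * a = 1 := by rw [mul_comm]; exact hinv
  set idx : ZMod k → ℕ := fun y => ((y - b') * a⁻¹).val with hidxdef
  have hlk : l ≤ k - 2 := hcard ▸ hAk
  have hidx_lt : ∀ y, idx y < k := fun y => ZMod.val_lt _
  have hcastidx : ∀ y : ZMod k, ((idx y : ℕ) : ZMod k) = (y - b') * a⁻¹ :=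
    fun y => hval _
  have hrecover : ∀ y : ZMod k, b' + (idx y : ZMod k) * a = y := by
    intro y
    rw [hcastidx, mul_assoc, hinv', mul_one]
    ring
  have hmem : ∀ y : ZMod k, y ∈ A ↔ idx y < l := by
    intro y
    constructor
    · intro hy
      rw [hA] at hy
      simp only [Finset.mem_image, Finset.mem_range] at hy
      obtain ⟨i, hi, rfl⟩ := hy
      have : idx (b' + (i : ZMod k) * a) = ((i : ZMod k)).val := by
        simp only [hidxdef]
        congr 1
        rw [add_sub_cancel_left, mul_assoc, hinv, mul_one]
      rw [this, ZMod.val_natCast, Nat.mod_eq_of_lt (by omega)]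
      exact hi
    · intro hy
      rw [hA]
      simp only [Finset.mem_image, Finset.mem_range]
      exact ⟨idx y, hy, hrecover y⟩
  have hidx_inj : Set.InjOn idx A' := by
    intro y _ y' _ h
    have : ((idx y : ℕ) : ZMod k) = ((idx y' : ℕ) : ZMod k) := by rw [h]
    rw [hcastidx, hcastidx] at this
    have h2 : (y - b') * a⁻¹ * a = (y' - b') * a⁻¹ * a := by rw [this]
    rw [mul_assoc, mul_assoc, hinv', mul_one, mul_one] at h2
    linear_combination h2
  set t : ℕ := (x * a⁻¹).val with htdef
  have ht_lt : t < k := ZMod.val_lt _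
  have hx_eq : x = (t : ZMod k) * a := by
    rw [htdef, hval, mul_assoc, hinv', mul_one]
  set S : Finset ℕ := A'.image idx with hS
  have hcardS : S.card = l - 1 := by
    rw [hS, Finset.card_image_of_injOn hidx_inj, hcardA', hcard]
  have hSrange : ∀ i ∈ S, i < l := by
    intro i hi
    rw [hS, Finset.mem_image] at hi
    obtain ⟨y, hy, rfl⟩ := hi
    exact (hmem y).mp (hsub hy)
  have hSshift : ∀ i ∈ S, (i + t) % k < l := by
    intro i hi
    rw [hS, Finset.mem_image] at hi
    obtain ⟨y, hy, rfl⟩ := hi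
    have hyx : y + x ∈ A := by
      apply hshift
      exact Finset.mem_image_of_mem _ hy
    have h3 := (hmem _).mp hyx
    have hcomp : idx (y + x) = (idx y + t) % k := by
      have : (y + x - b') * a⁻¹ = ((idx y + t : ℕ) : ZMod k) := by
        push_cast
        rw [hcastidx, htdef, hval]
        ring
      simp only [hidxdef]
      rw [this, ZMod.val_natCast]
    rwa [hcomp] at h3
  -- counting argument: t ∈ {0, 1, k-1}
  have ht : t = 0 ∨ t = 1 ∨ t = k - 1 := by
    by_contra hcon
    push_neg at hcon
    have ht2 : 2 ≤ t := by omega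
    have ht3 : t ≤ k - 2 := by omega
    have hsubset : S ⊆ Finset.range (l - t) ∪ Finset.Ico (k - t) l := by
      intro i hi
      have hil := hSrange i hi
      have hmod := hSshift i hi
      simp only [Finset.mem_union, Finset.mem_range, Finset.mem_Ico]
      rcases lt_or_ge (i + t) k with h | h
      · rw [Nat.mod_eq_of_lt h] at hmod
        omega
      · have : (i + t) % k = i + t - k := by
          rw [Nat.mod_eq_sub_mod h, Nat.mod_eq_of_lt (by omega)]
        rw [this] at hmod
        omega
    have hle := Finset.card_le_card hsubset
    have hunion := Finset.card_union_le (Finset.range (l - t)) (Finset.Ico (k - t) l)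
    rw [Finset.card_range, Nat.card_Ico] at hunion
    omega
  rcases ht with h | h | h
  · left
    rw [hx_eq, h]
    simp
  · right; left
    rw [hx_eq, h]
    simp
  · right; right
    simp only [Set.mem_singleton_iff]
    rw [hx_eq, h]
    have : ((k - 1 : ℕ) : ZMod k) = -1 := by
      have : ((k : ℕ) : ZMod k) = 0 := ZMod.natCast_self k
      push_cast [Nat.cast_sub (by omega : 1 ≤ k)]
      rw [this]; ring
    rw [this]; ring
end

section
/- Let G be a complete directed graph on 4 vertices {u, v, x, y} with edge weights in Z_k (k ≥ 2). Then either w(xy) + w(yx) = 0 (so the 2-cycle through x and y has weight 0), or there exist two v–u directed paths in G, each with at least 3 vertices, having distinct weights. -/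
/-- The weight of a directed path given by a list of vertices:
the sum of the weights of its consecutive edges. -/
def pathWeight {V : Type*} {k : ℕ} (w : V → V → ZMod k) (p : List V) : ZMod k :=
  ((p.zip p.tail).map fun q => w q.1 q.2).sum

theorem two_paths_or_zero_two_cycle (k : ℕ) (hk : 2 ≤ k)
    (V : Type*) (u v x y : V)
    (hdist : [u, v, x, y].Nodup) (w : V → V → ZMod k) :
    w x y + w y x = 0 ∨
    ∃ p q : List V,
      p.Nodup ∧ q.Nodup ∧ 3 ≤ p.length ∧ 3 ≤ q.length ∧
      p.head? = some v ∧ p.getLast? = some u ∧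
      q.head? = some v ∧ q.getLast? = some u ∧
      (∀ z ∈ p, z ∈ [u, v, x, y]) ∧ (∀ z ∈ q, z ∈ [u, v, x, y]) ∧
      pathWeight w p ≠ pathWeight w q := by
  simp only [List.nodup_cons, List.mem_cons, List.not_mem_nil, or_false,
    List.nodup_nil, and_true, not_or] at hdist
  obtain ⟨⟨huv, hux, huy⟩, ⟨hvx, hvy⟩, hxy, -⟩ := hdist
  by_cases h : w x y + w y x = 0
  · exact Or.inl h
  right
  by_cases h2 : pathWeight w [v, x, u] = pathWeight w [v, x, y, u]
  · refine ⟨[v, y, u], [v, y, x, u], ?_, ?_, ?_, ?_, rfl, rfl, rfl, rfl, ?_, ?_, ?_⟩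
    · simp [huv, huy, hvy, Ne.symm huv, Ne.symm huy, Ne.symm hvy]
    · simp [huv, hux, huy, hvx, hvy, hxy, Ne.symm huv, Ne.symm hux, Ne.symm huy,
        Ne.symm hvx, Ne.symm hvy, Ne.symm hxy]
    · simp
    · simp
    · intro z hz; simp at hz ⊢; tauto
    · intro z hz; simp at hz ⊢; tauto
    · simp only [pathWeight, List.zip, List.zipWith, List.map, List.sum_cons,
        List.sum_nil, add_zero, List.tail_cons, List.zipWith_cons_cons, List.zipWith_nil_right,
        List.map_cons, List.map_nil] at h2 ⊢
      intro h3
      apply h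
      have := congrArg₂ (· + ·) h2 h3
      linear_combination -this
  · exact ⟨[v, x, u], [v, x, y, u],
      by simp [huv, hux, hvx, Ne.symm huv, Ne.symm hux, Ne.symm hvx],
      by simp [huv, hux, huy, hvx, hvy, hxy, Ne.symm huv, Ne.symm hux, Ne.symm huy,
        Ne.symm hvx, Ne.symm hvy, Ne.symm hxy],
      by simp, by simp, rfl, rfl, rfl, rfl,
      by intro z hz; simp at hz ⊢; tauto,
      by intro z hz; simp at hz ⊢; tauto, h2⟩
end

section
/- Let G be a complete directed graph with edge weights w' taking values in {0, a, −a} ⊆ Z_k where gcd(a, k) = 1, and suppose G contains no directed cycle of weight 0 and no heavy triple. If all edges of G have weight 0 or c for a fixed c ∈ {a, −a}, then G contains a Hamiltonian directed path all of whose edges have weight c. -/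
/-- The weight of a directed cycle given by a list of distinct vertices. -/
def cycleWeight {V : Type*} {k : ℕ} (w : V → V → ZMod k) (c : List V) : ZMod k :=
  ((c.zip (c.rotate 1)).map fun p => w p.1 p.2).sum

lemma insert_chain {V : Type*} (r : V → V → Prop) (v : V) :
    ∀ (p : List V), (∀ x ∈ p, r v x ∨ r x v) → p.Chain' r →
    ∃ q : List V, q.Perm (v :: p) ∧ q.Chain' r ∧
      (q.head? = some v ∨ q.head? = p.head?)
  | [] => fun _ _ => ⟨[v], by simp, List.isChain_singleton v, Or.inl rfl⟩
  | x :: t => fun htot hchain => by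
    rcases htot x (by simp) with h | h
    · exact ⟨v :: x :: t, List.Perm.refl _, List.isChain_cons_cons.2 ⟨h, hchain⟩, Or.inl rfl⟩
    · obtain ⟨q, hperm, hq, hhead⟩ :=
        insert_chain r v t (fun y hy => htot y (List.mem_cons_of_mem _ hy))
          hchain.tail
      refine ⟨x :: q, ?_, ?_, Or.inr rfl⟩
      · exact (hperm.cons x).trans (List.Perm.swap v x t)
      · refine List.isChain_cons.2 ⟨?_, hq⟩
        intro y hy
        rcases hhead with h1 | h1
        · rw [h1] at hy; cases hy; exact h
        · rw [h1] at hy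
          exact (List.isChain_cons.1 hchain).1 y hy

lemma exists_chain_perm {V : Type*} (r : V → V → Prop)
    (htot : ∀ x y : V, x ≠ y → r x y ∨ r y x) :
    ∀ (l : List V), l.Nodup → ∃ q : List V, q.Perm l ∧ q.Chain' r
  | [] => fun _ => ⟨[], List.Perm.refl _, List.isChain_nil⟩
  | v :: t => fun hnd => by
    obtain ⟨q, hperm, hq⟩ := exists_chain_perm r htot t hnd.of_cons
    obtain ⟨q', hperm', hq', _⟩ := insert_chain r v q
      (fun x hx => htot v x (by
        intro h; subst h
        exact (List.nodup_cons.1 hnd).1 (hperm.mem_iff.1 hx)))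
      hq
    exact ⟨q', hperm'.trans (hperm.cons v), hq'⟩

theorem hamiltonian_path_of_monochromatic (k : ℕ) (hk : 2 ≤ k)
    (V : Type*) [Fintype V] (w : V → V → ZMod k) (a : ZMod k)
    (ha : Nat.gcd a.val k = 1)
    (hw : ∀ x y : V, x ≠ y → w x y ∈ ({0, a, -a} : Set (ZMod k)))
    (hnocycle : ¬ ∃ c : List V, c.Nodup ∧ 2 ≤ c.length ∧ cycleWeight w c = 0)
    (hnoheavy : ¬ ∃ x y z : V, ∃ c : ZMod k, [x, y, z].Nodup ∧
      (c = a ∨ c = -a) ∧ w x y = c ∧ w y z = c ∧ w x z = -c)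
    (c : ZMod k) (hc : c = a ∨ c = -a)
    (hall : ∀ x y : V, x ≠ y → w x y = 0 ∨ w x y = c) :
    ∃ p : List V, p.Nodup ∧ p.length = Fintype.card V ∧
      p.Chain' (fun x y => w x y = c) := by
  classical
  have htot : ∀ x y : V, x ≠ y → w x y = c ∨ w y x = c := by
    intro x y hxy
    rcases hall x y hxy with h1 | h1
    · rcases hall y x hxy.symm with h2 | h2
      · exfalso
        apply hnocycle
        refine ⟨[x, y], by simp [hxy], by simp, ?_⟩
        simp [cycleWeight, List.rotate, h1, h2]
      · exact Or.inr h2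
    · exact Or.inl h1
  obtain ⟨q, hperm, hq⟩ := exists_chain_perm (fun x y => w x y = c) htot
    Finset.univ.toList (Finset.nodup_toList _)
  refine ⟨q, hperm.nodup_iff.2 (Finset.nodup_toList _), ?_, hq⟩
  rw [hperm.length_eq, Finset.length_toList, Finset.card_univ]
end

section
/- For k ≥ 2, c ∈ Z_k with gcd(c,k) = 1, and nonempty finite sets A' ⊆ A ⊆ Z_k with |A'| = |A| − 2 and A' ∪ (A'−c) ∪ (A'+c) ∪ (A'+2c) ⊆ A, it follows that A = Z_k. -/
theorem no_small_set_contains_translates (k : ℕ) [NeZero k] (hk : 2 ≤ k)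
    (c : ZMod k) (hc : Nat.gcd c.val k = 1)
    (A' A : Finset (ZMod k)) (hA' : A'.Nonempty) (hsub : A' ⊆ A)
    (hcard : A'.card = A.card - 2)
    (hcontain : A' ∪ A'.image (· + (-c)) ∪ A'.image (· + c) ∪ A'.image (· + 2 * c) ⊆ A) :
    A = Finset.univ := by
  have hinj : Function.Injective (fun x : ZMod k => x + c) := add_left_injective c
  -- key lemma: a nonempty subset of A invariant under +c forces A = univ
  have key : ∀ S : Finset (ZMod k), S.Nonempty → S ⊆ A →
      S.image (· + c) ⊆ S → A = Finset.univ := by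
    intro S hSne hSA hSinv
    have hcardim : (S.image (· + c)).card = S.card :=
      Finset.card_image_of_injective _ hinj
    have heq : S.image (· + c) = S :=
      Finset.eq_of_subset_of_card_le hSinv (le_of_eq hcardim.symm)
    have hstep : ∀ x ∈ S, x + c ∈ S := by
      intro x hx
      exact hSinv (Finset.mem_image_of_mem _ hx)
    obtain ⟨a, ha⟩ := hSne
    have hiter : ∀ n : ℕ, a + (n : ZMod k) * c ∈ S := by
      intro n
      induction n with
      | zero => simpa using ha
      | succ m ih =>
        have := hstep _ ih
        push_cast
        convert this using 1
        ring
    -- c is a unit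
    have hunit : IsUnit c := by
      have : IsUnit ((c.val : ZMod k)) := (ZMod.isUnit_iff_coprime c.val k).mpr hc
      simpa [ZMod.natCast_val, ZMod.cast_id] using this
    obtain ⟨u, hu⟩ := hunit
    have hSuniv : S = Finset.univ := by
      apply Finset.eq_univ_of_forall
      intro y
      have hn := hiter (((y - a) * (↑u⁻¹ : ZMod k)).val)
      have hcast : ((((y - a) * (↑u⁻¹ : ZMod k)).val : ℕ) : ZMod k)
          = (y - a) * (↑u⁻¹ : ZMod k) := by
        simp [ZMod.natCast_val, ZMod.cast_id]
      rw [hcast] at hn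
      have : a + (y - a) * (↑u⁻¹ : ZMod k) * c = y := by
        have huu : (↑u⁻¹ : ZMod k) * c = 1 := by
          rw [← hu]; exact u.inv_mul
        calc a + (y - a) * (↑u⁻¹ : ZMod k) * c
            = a + (y - a) * ((↑u⁻¹ : ZMod k) * c) := by ring
          _ = y := by rw [huu]; ring
      rwa [this] at hn
    apply Finset.eq_univ_of_forall
    intro y
    exact hSA (hSuniv ▸ Finset.mem_univ y)
  -- chain of sets
  set B1 := A' ∪ A'.image (· + (-c)) with hB1def
  set B2 := B1 ∪ A'.image (· + c) with hB2def
  set B3 := B2 ∪ A'.image (· + 2 * c) with hB3def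
  have h01 : A' ⊆ B1 := Finset.subset_union_left
  have h12 : B1 ⊆ B2 := Finset.subset_union_left
  have h23 : B2 ⊆ B3 := Finset.subset_union_left
  have h3A : B3 ⊆ A := hcontain
  have hc01 : A'.card ≤ B1.card := Finset.card_le_card h01
  have hc12 : B1.card ≤ B2.card := Finset.card_le_card h12
  have hc23 : B2.card ≤ B3.card := Finset.card_le_card h23
  have hc3A : B3.card ≤ A.card := Finset.card_le_card h3A
  have hA1 : 1 ≤ A'.card := hA'.card_pos
  have hAcard : A.card = A'.card + 2 := by
    have := Finset.card_le_card hsub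
    omega
  have himg_comp : (A'.image (· + (-c))).image (· + c) = A' := by
    rw [Finset.image_image]
    simp
  have hcases : A'.card = B1.card ∨ B1.card = B2.card ∨ B2.card = B3.card := by omega
  rcases hcases with h | h | h
  · -- A' = B1, so A' - c ⊆ A', so A' invariant
    have heq : A' = B1 := Finset.eq_of_subset_of_card_le h01 (le_of_eq h.symm)
    have hsub' : A'.image (· + (-c)) ⊆ A' := by
      intro x hx
      have hxB : x ∈ B1 := Finset.mem_union_right _ hx
      rwa [← heq] at hxB
    have heq2 : A'.image (· + (-c)) = A' :=
      Finset.eq_of_subset_of_card_le hsub'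
        (le_of_eq (Finset.card_image_of_injective _ (add_left_injective (-c))).symm)
    have hinv : A'.image (· + c) ⊆ A' := by
      have h2 : (A'.image (· + (-c))).image (· + c) = A'.image (· + c) :=
        congrArg (fun s : Finset (ZMod k) => s.image (· + c)) heq2
      have h3 : A'.image (· + c) = A' := h2.symm.trans himg_comp
      exact h3.le
    exact key A' hA' hsub hinv
  · -- B1 = B2, so A' + c ⊆ B1, B1 invariant
    have heq : B1 = B2 := Finset.eq_of_subset_of_card_le h12 (le_of_eq h.symm)
    have hsub' : A'.image (· + c) ⊆ B1 := by
      rw [heq]; exact Finset.subset_union_right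
    have hB1ne : B1.Nonempty := hA'.mono h01
    have hB1A : B1 ⊆ A := (h12.trans h23).trans h3A
    have hinv : B1.image (· + c) ⊆ B1 := by
      rw [hB1def, Finset.image_union, himg_comp]
      exact Finset.union_subset hsub' h01
    exact key B1 hB1ne hB1A hinv
  · -- B2 = B3, so A' + 2c ⊆ B2, B2 invariant
    have heq : B2 = B3 := Finset.eq_of_subset_of_card_le h23 (le_of_eq h.symm)
    have hsub' : A'.image (· + 2 * c) ⊆ B2 := by
      rw [heq]; exact Finset.subset_union_right
    have hB2ne : B2.Nonempty := hA'.mono (h01.trans h12)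
    have hB2A : B2 ⊆ A := h23.trans h3A
    have hcc : (A'.image (· + c)).image (· + c) = A'.image (· + 2 * c) := by
      rw [Finset.image_image]
      congr 1
      funext x
      simp only [Function.comp_apply]
      ring
    have hinv : B2.image (· + c) ⊆ B2 := by
      rw [hB2def, hB1def, Finset.image_union, Finset.image_union, himg_comp, hcc]
      refine Finset.union_subset (Finset.union_subset ?_ ?_) hsub'
      · exact Finset.subset_union_right
      · exact h01.trans h12
    exact key B2 hB2ne hB2A hinv
end
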